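/- arXiv:math/0605102 — 3 statements merged into one kernel-verified Lean document; each statement's English description precedes it below -/
import Mathlib

section
/- The Hessian map 𝔥 is a linear isomorphism from 𝔖^m ℝ^{n_X+n_Z} onto the subspace M_𝔥 of n_X × n_Z matrices H = (H_{ij}) of homogeneous degree-(m−2) polynomials satisfying the compatibility conditions ∂H_{ij}/∂x_{i'} = ∂H_{i'j}/∂x_i for all i < i' and all j, and ∂H_{ij}/∂z_{j'} = ∂H_{ij'}/∂z_j for all i and all j < j'. -/
open MvPolynomial

/-- "No pure x- or z-monomials". -/
def NoPureMonomials {nX nZ : ℕ} (S : MvPolynomial (Fin nX ⊕ Fin nZ) ℝ) : Prop :=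
  ∀ d ∈ S.support, (∃ i, d (Sum.inl i) ≠ 0) ∧ (∃ j, d (Sum.inr j) ≠ 0)

/-- The mixed Hessian `𝔥(S) = (∂²S/∂x_i∂z_j)`. -/
noncomputable def mixedHessian {nX nZ : ℕ} (S : MvPolynomial (Fin nX ⊕ Fin nZ) ℝ) :
    Fin nX → Fin nZ → MvPolynomial (Fin nX ⊕ Fin nZ) ℝ :=
  fun i j => pderiv (Sum.inl i) (pderiv (Sum.inr j) S)

/-- Membership in `M_𝔥`: an `n_X × n_Z` matrix of homogeneous degree `m-2` polynomials
satisfying the mixed-partial compatibility conditions. -/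
def MemMh {nX nZ : ℕ} (m : ℕ) (H : Fin nX → Fin nZ → MvPolynomial (Fin nX ⊕ Fin nZ) ℝ) :
    Prop :=
  (∀ i j, (H i j).IsHomogeneous (m - 2)) ∧
    (∀ i i' j, pderiv (Sum.inl i') (H i j) = pderiv (Sum.inl i) (H i' j)) ∧
    (∀ i j j', pderiv (Sum.inr j') (H i j) = pderiv (Sum.inr j) (H i j'))

theorem coeff_pderiv' {σ : Type*} (i : σ) (p : MvPolynomial σ ℝ) (d : σ →₀ ℕ) :
    coeff d (pderiv i p) = ((d i : ℝ) + 1) * coeff (d + Finsupp.single i 1) p := by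
  classical
  induction p using MvPolynomial.induction_on' with
  | add p q hp hq => simp [coeff_add, hp, hq, mul_add]
  | monomial s a =>
    rw [pderiv_monomial, coeff_monomial, coeff_monomial]
    by_cases h : s = d + Finsupp.single i 1
    · subst h
      rw [if_pos (add_tsub_cancel_right _ _)]
      simp [Finsupp.add_apply, Finsupp.single_apply]
      ring
    · rw [if_neg h]
      by_cases h0 : s i = 0
      · split_ifs with h1
        · simp [h0]
        · ring
      · rw [if_neg, mul_zero]
        intro h1
        apply h
        rw [← h1, tsub_add_cancel_of_le]
        exact Finsupp.single_le_iff.mpr (Nat.one_le_iff_ne_zero.mpr h0)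

theorem pderiv_comm' {σ : Type*} (i j : σ) (p : MvPolynomial σ ℝ) :
    pderiv i (pderiv j p) = pderiv j (pderiv i p) := by
  classical
  ext d
  simp only [coeff_pderiv']
  by_cases h : i = j
  · subst h; rfl
  · rw [Finsupp.add_apply, Finsupp.add_apply,
      Finsupp.single_apply, Finsupp.single_apply, if_neg h, if_neg (Ne.symm h),
      add_right_comm d (Finsupp.single i 1)]
    push_cast
    ring

theorem weight_one_single {σ : Type*} (i : σ) :
    (Finsupp.weight (1 : σ → ℕ)) (Finsupp.single i 1) = 1 := by
  rw [Finsupp.weight_apply, Finsupp.sum_single_index] <;> simp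

theorem IsHomogeneous.pderiv' {σ : Type*} {n : ℕ} {p : MvPolynomial σ ℝ} (i : σ)
    (hp : p.IsHomogeneous n) : (pderiv i p).IsHomogeneous (n - 1) := by
  intro d hd
  rw [coeff_pderiv'] at hd
  have h2 : coeff (d + Finsupp.single i 1) p ≠ 0 := by
    intro h; rw [h, mul_zero] at hd; exact hd rfl
  have := hp h2
  rw [map_add, weight_one_single] at this
  omega

theorem sub2_restore {σ : Type*} [DecidableEq σ] (d : σ →₀ ℕ) (a b : σ) (hab : a ≠ b)
    (ha : d a ≠ 0) (hb : d b ≠ 0) :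
    (d - Finsupp.single a 1 - Finsupp.single b 1) + Finsupp.single a 1 + Finsupp.single b 1 = d := by
  ext c
  simp only [Finsupp.add_apply, Finsupp.tsub_apply, Finsupp.single_apply]
  by_cases h1 : a = c <;> by_cases h2 : b = c <;>
    simp only [h1, h2, if_pos, if_neg, if_true, if_false] <;> subst_vars <;> simp_all <;> omega

theorem add_sub2 {σ : Type*} [DecidableEq σ] (g : σ →₀ ℕ) (a b : σ) :
    (g + Finsupp.single a 1 + Finsupp.single b 1) - Finsupp.single a 1 - Finsupp.single b 1 = g := by
  ext c
  simp only [Finsupp.add_apply, Finsupp.tsub_apply, Finsupp.single_apply]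
  by_cases h1 : a = c <;> by_cases h2 : b = c <;> simp [h1, h2] <;> subst_vars <;> simp_all <;> omega

theorem sub3_ac {σ : Type*} [DecidableEq σ] (g : σ →₀ ℕ) (a b c : σ)
    (hab : a ≠ b) (hac : a ≠ c) (hbc : b ≠ c) :
    (g + Finsupp.single a 1 + Finsupp.single b 1 + Finsupp.single c 1)
      - Finsupp.single a 1 - Finsupp.single c 1 = g + Finsupp.single b 1 := by
  ext s
  simp only [Finsupp.add_apply, Finsupp.tsub_apply, Finsupp.single_apply]
  by_cases h1 : a = s <;> by_cases h2 : b = s <;> by_cases h3 : c = s <;>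
    simp only [h1, h2, h3, if_pos, if_neg, if_true, if_false] <;> subst_vars <;>
    simp_all <;> omega

theorem sub3_bc {σ : Type*} [DecidableEq σ] (g : σ →₀ ℕ) (a b c : σ)
    (hab : a ≠ b) (hac : a ≠ c) (hbc : b ≠ c) :
    (g + Finsupp.single a 1 + Finsupp.single b 1 + Finsupp.single c 1)
      - Finsupp.single b 1 - Finsupp.single c 1 = g + Finsupp.single a 1 := by
  ext s
  simp only [Finsupp.add_apply, Finsupp.tsub_apply, Finsupp.single_apply]
  by_cases h1 : a = s <;> by_cases h2 : b = s <;> by_cases h3 : c = s <;>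
    simp only [h1, h2, h3, if_pos, if_neg, if_true, if_false] <;> subst_vars <;>
    simp_all <;> omega

theorem sub3_ab {σ : Type*} [DecidableEq σ] (g : σ →₀ ℕ) (a b c : σ)
    (hab : a ≠ b) (hac : a ≠ c) (hbc : b ≠ c) :
    (g + Finsupp.single a 1 + Finsupp.single b 1 + Finsupp.single c 1)
      - Finsupp.single a 1 - Finsupp.single b 1 = g + Finsupp.single c 1 := by
  ext s
  simp only [Finsupp.add_apply, Finsupp.tsub_apply, Finsupp.single_apply]
  by_cases h1 : a = s <;> by_cases h2 : b = s <;> by_cases h3 : c = s <;>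
    simp only [h1, h2, h3, if_pos, if_neg, if_true, if_false] <;> subst_vars <;>
    simp_all <;> omega

theorem decompose3 {σ : Type*} [DecidableEq σ] (d : σ →₀ ℕ) (a b c : σ)
    (hab : a ≠ b) (hac : a ≠ c) (hbc : b ≠ c) (ha : d a ≠ 0) (hb : d b ≠ 0) (hc : d c ≠ 0) :
    ∃ g, d = g + Finsupp.single a 1 + Finsupp.single b 1 + Finsupp.single c 1 := by
  refine ⟨d - Finsupp.single a 1 - Finsupp.single b 1 - Finsupp.single c 1, ?_⟩
  ext s
  simp only [Finsupp.add_apply, Finsupp.tsub_apply, Finsupp.single_apply]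
  by_cases h1 : a = s <;> by_cases h2 : b = s <;> by_cases h3 : c = s <;>
    simp only [h1, h2, h3, if_pos, if_neg, if_true, if_false] <;> subst_vars <;>
    simp_all <;> omega

/-- The coefficient formula for the mixed Hessian. -/
theorem coeff_mixedHessian {nX nZ : ℕ} (S : MvPolynomial (Fin nX ⊕ Fin nZ) ℝ)
    (i : Fin nX) (j : Fin nZ) (g : Fin nX ⊕ Fin nZ →₀ ℕ) :
    coeff g (mixedHessian S i j) =
      ((g (Sum.inl i) : ℝ) + 1) * ((g (Sum.inr j) : ℝ) + 1) *
        coeff (g + Finsupp.single (Sum.inl i) 1 + Finsupp.single (Sum.inr j) 1) S := by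
  rw [mixedHessian, coeff_pderiv', coeff_pderiv']
  have : ((g + Finsupp.single (Sum.inl i) 1 : Fin nX ⊕ Fin nZ →₀ ℕ)) (Sum.inr j)
      = g (Sum.inr j) := by
    simp [Finsupp.add_apply, Finsupp.single_apply]
  rw [this, mul_assoc]

/-- the Hessian map `𝔥` is a linear isomorphism from `𝔖^m ℝ^{n_X+n_Z}` onto
`M_𝔥` — it is linear (definitionally), injective, maps into `M_𝔥`, and is surjective
onto `M_𝔥`. -/
theorem mixedHessian_isomorphism (nX nZ m : ℕ) (hm : 2 ≤ m) :
    (∀ S T : MvPolynomial (Fin nX ⊕ Fin nZ) ℝ,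
        S.IsHomogeneous m → NoPureMonomials S → T.IsHomogeneous m → NoPureMonomials T →
        mixedHessian S = mixedHessian T → S = T) ∧
    (∀ S : MvPolynomial (Fin nX ⊕ Fin nZ) ℝ,
        S.IsHomogeneous m → NoPureMonomials S → MemMh m (mixedHessian S)) ∧
    (∀ H : Fin nX → Fin nZ → MvPolynomial (Fin nX ⊕ Fin nZ) ℝ, MemMh m H →
        ∃ S : MvPolynomial (Fin nX ⊕ Fin nZ) ℝ,
          S.IsHomogeneous m ∧ NoPureMonomials S ∧ mixedHessian S = fun i j => H i j) := by
  classical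
  refine ⟨?_, ?_, ?_⟩
  · -- injectivity
    intro S T hS hSn hT hTn heq
    ext d
    by_contra hne
    have hd : d ∈ S.support ∪ T.support := by
      by_contra h
      rw [Finset.mem_union] at h
      push_neg at h
      rw [MvPolynomial.notMem_support_iff.mp h.1, MvPolynomial.notMem_support_iff.mp h.2] at hne
      exact hne rfl
    have hP : (∃ i, d (Sum.inl i) ≠ 0) ∧ (∃ j, d (Sum.inr j) ≠ 0) := by
      rcases Finset.mem_union.mp hd with h | h
      · exact hSn d h
      · exact hTn d h
    obtain ⟨⟨i, hi⟩, ⟨j, hj⟩⟩ := hP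
    obtain ⟨g, hg⟩ : ∃ g, d = g + Finsupp.single (Sum.inl i) 1 + Finsupp.single (Sum.inr j) 1 := by
      refine ⟨d - Finsupp.single (Sum.inl i) 1 - Finsupp.single (Sum.inr j) 1, ?_⟩
      exact (sub2_restore d _ _ (by simp) hi hj).symm
    have h1 := coeff_mixedHessian S i j g
    have h2 := coeff_mixedHessian T i j g
    rw [heq, h2, ← hg] at h1
    have hpos : ((g (Sum.inl i) : ℝ) + 1) * ((g (Sum.inr j) : ℝ) + 1) ≠ 0 := by positivity
    rw [← hg] at h2
    exact hne (mul_left_cancel₀ hpos h1.symm)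
  · -- maps into M_h
    intro S hS _
    refine ⟨?_, ?_, ?_⟩
    · intro i j
      have h1 := IsHomogeneous.pderiv' (Sum.inr j) hS
      have h2 := IsHomogeneous.pderiv' (Sum.inl i) h1
      have h3 : m - 1 - 1 = m - 2 := by omega
      rwa [h3] at h2
    · intro i i' j
      exact pderiv_comm' _ _ _
    · intro i j j'
      simp only [mixedHessian]
      rw [pderiv_comm' (Sum.inr j') (Sum.inl i), pderiv_comm' (Sum.inr j') (Sum.inr j),
        pderiv_comm' (Sum.inl i) (Sum.inr j)]
  · -- surjectivity
    intro H hH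
    obtain ⟨hhom, hx, hz⟩ := hH
    set e : Fin nX → (Fin nX ⊕ Fin nZ →₀ ℕ) := fun i => Finsupp.single (Sum.inl i) 1 with he
    set f : Fin nZ → (Fin nX ⊕ Fin nZ →₀ ℕ) := fun j => Finsupp.single (Sum.inr j) 1 with hf
    set A : (Fin nX ⊕ Fin nZ →₀ ℕ) → Fin nX → Fin nZ → ℝ := fun d i j =>
      coeff (d - e i - f j) (H i j) / ((d (Sum.inl i) : ℝ) * (d (Sum.inr j) : ℝ)) with hA
    have LA : ∀ (g : Fin nX ⊕ Fin nZ →₀ ℕ) i i' j,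
        ((g (Sum.inl i') : ℝ) + 1) * coeff (g + e i') (H i j)
          = ((g (Sum.inl i) : ℝ) + 1) * coeff (g + e i) (H i' j) := by
      intro g i i' j
      have := congrArg (coeff g) (hx i i' j)
      rwa [coeff_pderiv', coeff_pderiv'] at this
    have LB : ∀ (g : Fin nX ⊕ Fin nZ →₀ ℕ) i j j',
        ((g (Sum.inr j') : ℝ) + 1) * coeff (g + f j') (H i j)
          = ((g (Sum.inr j) : ℝ) + 1) * coeff (g + f j) (H i j') := by
      intro g i j j'
      have := congrArg (coeff g) (hz i j j')
      rwa [coeff_pderiv', coeff_pderiv'] at this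
    have swap_x : ∀ (d : Fin nX ⊕ Fin nZ →₀ ℕ) i i' j, d (Sum.inl i) ≠ 0 →
        d (Sum.inl i') ≠ 0 → d (Sum.inr j) ≠ 0 → A d i j = A d i' j := by
      intro d i i' j hi hi' hj
      by_cases hii : i = i'
      · subst hii; rfl
      obtain ⟨g, hg⟩ := decompose3 d (Sum.inl i) (Sum.inl i') (Sum.inr j)
        (by simp [hii]) (by simp) (by simp) hi hi' hj
      have hd1 : d - e i - f j = g + e i' := by
        rw [hg, he, hf]
        exact sub3_ac g _ _ _ (by simp [hii]) (by simp) (by simp)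
      have hd2 : d - e i' - f j = g + e i := by
        rw [hg, he, hf]
        exact sub3_bc g _ _ _ (by simp [hii]) (by simp) (by simp)
      have hdi : d (Sum.inl i) = g (Sum.inl i) + 1 := by
        rw [hg]; simp [he, hf, Finsupp.add_apply, Finsupp.single_apply, Ne.symm hii]
      have hdi' : d (Sum.inl i') = g (Sum.inl i') + 1 := by
        rw [hg]; simp [he, hf, Finsupp.add_apply, Finsupp.single_apply, hii]
      have hdj : d (Sum.inr j) = g (Sum.inr j) + 1 := by
        rw [hg]; simp [he, hf, Finsupp.add_apply, Finsupp.single_apply]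
      simp only [hA]
      rw [hd1, hd2, hdi, hdi', hdj]
      push_cast
      rw [div_eq_div_iff (by positivity) (by positivity)]
      linear_combination ((g (Sum.inr j) : ℝ) + 1) * LA g i i' j
    have swap_z : ∀ (d : Fin nX ⊕ Fin nZ →₀ ℕ) i j j', d (Sum.inl i) ≠ 0 →
        d (Sum.inr j) ≠ 0 → d (Sum.inr j') ≠ 0 → A d i j = A d i j' := by
      intro d i j j' hi hj hj'
      by_cases hjj : j = j'
      · subst hjj; rfl
      obtain ⟨g, hg⟩ := decompose3 d (Sum.inl i) (Sum.inr j) (Sum.inr j')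
        (by simp) (by simp) (by simp [hjj]) hi hj hj'
      have hd1 : d - e i - f j = g + f j' := by
        rw [hg, he, hf]
        exact sub3_ab g _ _ _ (by simp) (by simp) (by simp [hjj])
      have hd2 : d - e i - f j' = g + f j := by
        rw [hg, he, hf]
        exact sub3_ac g _ _ _ (by simp) (by simp) (by simp [hjj])
      have hdi : d (Sum.inl i) = g (Sum.inl i) + 1 := by
        rw [hg]; simp [he, hf, Finsupp.add_apply, Finsupp.single_apply]
      have hdj : d (Sum.inr j) = g (Sum.inr j) + 1 := by
        rw [hg]; simp [he, hf, Finsupp.add_apply, Finsupp.single_apply, Ne.symm hjj]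
      have hdj' : d (Sum.inr j') = g (Sum.inr j') + 1 := by
        rw [hg]; simp [he, hf, Finsupp.add_apply, Finsupp.single_apply, hjj]
      simp only [hA]
      rw [hd1, hd2, hdi, hdj, hdj']
      push_cast
      rw [div_eq_div_iff (by positivity) (by positivity)]
      linear_combination ((g (Sum.inl i) : ℝ) + 1) * LB g i j j'
    set P : (Fin nX ⊕ Fin nZ →₀ ℕ) → Prop := fun d =>
      (∃ i, d (Sum.inl i) ≠ 0) ∧ (∃ j, d (Sum.inr j) ≠ 0) with hP
    set c : (Fin nX ⊕ Fin nZ →₀ ℕ) → ℝ := fun d =>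
      if h : P d then A d h.1.choose h.2.choose else 0 with hc
    have key : ∀ (d : Fin nX ⊕ Fin nZ →₀ ℕ) i j, d (Sum.inl i) ≠ 0 → d (Sum.inr j) ≠ 0 →
        c d = A d i j := by
      intro d i j hi hj
      have hPd : P d := ⟨⟨i, hi⟩, ⟨j, hj⟩⟩
      simp only [hc, dif_pos hPd]
      calc A d hPd.1.choose hPd.2.choose
          = A d i hPd.2.choose := swap_x d _ i _ hPd.1.choose_spec hi hPd.2.choose_spec
        _ = A d i j := swap_z d i _ j hi hPd.2.choose_spec hj
    set T : Finset (Fin nX ⊕ Fin nZ →₀ ℕ) :=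
      (Finset.univ : Finset (Fin nX × Fin nZ)).biUnion
        (fun p => (H p.1 p.2).support.image (· + e p.1 + f p.2)) with hT
    have hcT : ∀ d, c d ≠ 0 → d ∈ T := by
      intro d hd
      rw [hc] at hd
      simp only at hd
      split_ifs at hd with h
      · have hnum : coeff (d - e h.1.choose - f h.2.choose) (H h.1.choose h.2.choose) ≠ 0 := by
          intro h0
          simp only [hA, h0, zero_div] at hd
          exact hd rfl
        rw [hT]
        refine Finset.mem_biUnion.mpr ⟨(h.1.choose, h.2.choose), Finset.mem_univ _,
          Finset.mem_image.mpr ⟨d - e h.1.choose - f h.2.choose,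
            MvPolynomial.mem_support_iff.mpr hnum, ?_⟩⟩
        simp only [he, hf]
        exact sub2_restore d _ _ (by simp) h.1.choose_spec h.2.choose_spec
      · exact absurd rfl hd
    set S : MvPolynomial (Fin nX ⊕ Fin nZ) ℝ := AddMonoidAlgebra.ofCoeff (Finsupp.onFinset T c hcT) with hSdef
    have hScoeff : ∀ d, coeff d S = c d := fun d => rfl
    have hSP : ∀ d, coeff d S ≠ 0 → P d := by
      intro d hd
      rw [hScoeff, hc] at hd
      by_contra h
      simp only [dif_neg h] at hd
      exact hd rfl
    refine ⟨S, ?_, ?_, ?_⟩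
    · -- homogeneous of degree m
      intro d hd
      have hPd := hSP d hd
      rw [hScoeff d, key d hPd.1.choose hPd.2.choose hPd.1.choose_spec hPd.2.choose_spec] at hd
      have hnum : coeff (d - e hPd.1.choose - f hPd.2.choose) (H hPd.1.choose hPd.2.choose) ≠ 0 := by
        intro h0
        simp only [hA, h0, zero_div] at hd
        exact hd rfl
      have hw := hhom _ _ hnum
      have hrest := sub2_restore d (Sum.inl hPd.1.choose) (Sum.inr hPd.2.choose) (by simp)
        hPd.1.choose_spec hPd.2.choose_spec
      have hsum : (Finsupp.weight 1) d
          = (Finsupp.weight (1 : (Fin nX ⊕ Fin nZ) → ℕ)) (d - e hPd.1.choose - f hPd.2.choose)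
            + 1 + 1 := by
        conv_lhs => rw [← hrest]
        simp only [he, hf]
        rw [map_add, map_add, weight_one_single, weight_one_single]
      rw [hsum, hw]
      omega
    · -- no pure monomials
      intro d hd
      exact hSP d (MvPolynomial.mem_support_iff.mp hd)
    · -- hessian equals H
      funext i j
      ext g
      rw [coeff_mixedHessian]
      set d := g + Finsupp.single (Sum.inl i) 1 + Finsupp.single (Sum.inr j) 1 with hd
      have hdi : d (Sum.inl i) = g (Sum.inl i) + 1 := by
        rw [hd]; simp [Finsupp.add_apply, Finsupp.single_apply]
      have hdj : d (Sum.inr j) = g (Sum.inr j) + 1 := by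
        rw [hd]; simp [Finsupp.add_apply, Finsupp.single_apply]
      rw [hScoeff, key d i j (by omega) (by omega)]
      simp only [hA]
      have hsub : d - e i - f j = g := by
        rw [hd, he, hf]; exact add_sub2 g _ _
      rw [hsub, hdi, hdj]
      push_cast
      have h1 : (g (Sum.inl i) : ℝ) + 1 ≠ 0 := by positivity
      have h2 : (g (Sum.inr j) : ℝ) + 1 ≠ 0 := by positivity
      field_simp
end

section
/- If n_X = n_Z = n and S(x,z) is a homogeneous polynomial of degree m on ℝ^n × ℝ^n with no pure x- or z-terms such that det S''_{xz}(x,z) ≠ 0 for all (x,z) ≠ (0,0), then the Newton distance of S equals m/(2n). -/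
open MvPolynomial

lemma support_pderiv {σ : Type*} [DecidableEq σ] (k : σ) (P : MvPolynomial σ ℝ)
    {d' : σ →₀ ℕ} (hd' : d' ∈ (pderiv k P).support) :
    ∃ d ∈ P.support, d' + Finsupp.single k 1 = d := by
  classical
  rw [P.as_sum, map_sum] at hd'
  simp only [pderiv_monomial] at hd'
  obtain ⟨d, hd, hmem⟩ := Finset.mem_biUnion.mp (MvPolynomial.support_sum hd')
  rw [support_monomial] at hmem
  split_ifs at hmem with h
  · exact absurd hmem (Finset.notMem_empty _)
  · refine ⟨d, hd, ?_⟩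
    have hk : d k ≠ 0 := fun h0 => h (by rw [h0]; ring)
    rw [Finset.mem_singleton] at hmem
    subst hmem
    exact tsub_add_cancel_of_le (by rw [Finsupp.single_le_iff]; omega)

lemma eval_ne_zero_exists {σ : Type*} (p : σ → ℝ) (P : MvPolynomial σ ℝ)
    (h : eval p P ≠ 0) : ∃ d ∈ P.support, ∀ k, d k ≠ 0 → p k ≠ 0 := by
  by_contra hc
  push_neg at hc
  apply h
  rw [eval_eq]
  apply Finset.sum_eq_zero
  intro d hd
  obtain ⟨k, hk, hpk⟩ := hc d hd
  rw [Finset.prod_eq_zero (Finsupp.mem_support_iff.mpr hk) (by rw [hpk]; exact zero_pow hk)]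
  ring

lemma clm_repr {ι : Type*} [Fintype ι] [DecidableEq ι] (f : (ι → ℝ) →L[ℝ] ℝ) (p : ι → ℝ) :
    f p = ∑ k, p k * f (Pi.single k 1) := by
  conv_lhs => rw [← Finset.univ_sum_single p]
  rw [map_sum]
  congr 1; funext k
  have : Pi.single k (p k) = p k • (Pi.single k (1:ℝ) : ι → ℝ) := by
    rw [← Pi.single_smul]; simp
  rw [this, map_smul]
  rfl

lemma sum_coe_eq_deg {ι : Type*} [Fintype ι] {d : ι →₀ ℕ} {m : ℕ}
    (h : Finsupp.weight 1 d = m) : ∑ k, (d k : ℝ) = m := by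
  have : ∑ k, d k = m := by
    rw [← h, Finsupp.weight_apply, Finsupp.sum]
    simp only [Pi.one_apply, smul_eq_mul, mul_one]
    exact (Finset.sum_subset (Finset.subset_univ _)
      (fun x _ hx => Finsupp.notMem_support_iff.mp hx)).symm
  rw [← Nat.cast_sum, this]

lemma diag_mem_hull (n m : ℕ) (hn : 0 < n) (hm : 2 ≤ m)
    (S : MvPolynomial (Fin n ⊕ Fin n) ℝ)
    (hS : S.IsHomogeneous m)
    (hdet : ∀ x z : Fin n → ℝ, (x ≠ 0 ∨ z ≠ 0) →
      Matrix.det (Matrix.of fun i j : Fin n =>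
        eval (Sum.elim x z) (pderiv (Sum.inl i) (pderiv (Sum.inr j) S))) ≠ 0) :
    (fun _ => (m : ℝ) / (2 * n)) ∈
      convexHull ℝ ((fun (d : (Fin n ⊕ Fin n) →₀ ℕ) (k : Fin n ⊕ Fin n) => (d k : ℝ)) '' S.support) := by
  classical
  by_contra hx
  have hn' : (n : ℝ) ≠ 0 := Nat.cast_ne_zero.mpr hn.ne'
  -- separation
  obtain ⟨f, u, h1, h2⟩ := geometric_hahn_banach_point_closed
    (convex_convexHull ℝ _)
    ((S.support.finite_toSet.image _).isCompact_convexHull (𝕜 := ℝ) |>.isClosed) hx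
  have hsep : ∀ d ∈ S.support, f (fun _ => (m : ℝ) / (2 * n)) < f (fun k => (d k : ℝ)) :=
    fun d hd => h1.trans (h2 _ (subset_convexHull ℝ _ ⟨d, hd, rfl⟩))
  have : Nonempty (Fin n ⊕ Fin n) := ⟨Sum.inl ⟨0, hn⟩⟩
  obtain ⟨k₀, hk₀⟩ := Finite.exists_min (fun k : Fin n ⊕ Fin n => f (Pi.single k 1))
  set μ : ℝ := f (Pi.single k₀ 1) with hμ
  set κ : (Fin n ⊕ Fin n) → ℝ := fun k => f (Pi.single k 1) - μ with hκ
  have hκnn : ∀ k, 0 ≤ κ k := fun k => sub_nonneg.mpr (hk₀ k)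
  have hκk₀ : κ k₀ = 0 := by simp [hκ, hμ]
  set T : ℝ := ∑ k, κ k with hT
  set A : ℝ := (m : ℝ) / (2 * n) * T with hA
  have hcard : ((Fintype.card (Fin n ⊕ Fin n)) : ℝ) = 2 * n := by
    simp [Fintype.card_sum]; ring
  -- key inequality
  have hkey : ∀ d ∈ S.support, A < ∑ k, κ k * (d k : ℝ) := by
    intro d hd
    have hdeg : ∑ k, (d k : ℝ) = m := sum_coe_eq_deg (hS (mem_support_iff.mp hd))
    have e1 : ∑ k, κ k * (d k : ℝ) = f (fun k => (d k : ℝ)) - μ * m := by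
      rw [clm_repr f (fun k => (d k : ℝ)), ← hdeg, Finset.mul_sum, ← Finset.sum_sub_distrib]
      apply Finset.sum_congr rfl
      intro k _
      simp only [hκ]
      ring
    have e2 : A = f (fun _ => (m : ℝ) / (2 * n)) - μ * m := by
      have hTeq : T = (∑ k, f (Pi.single k (1:ℝ))) - (2 * n) * μ := by
        rw [hT]
        simp only [hκ]
        rw [Finset.sum_sub_distrib, Finset.sum_const, Finset.card_univ, nsmul_eq_mul, hcard]
      have hfd : f (fun _ => (m : ℝ) / (2 * n)) = (m : ℝ) / (2 * n) * ∑ k, f (Pi.single k (1:ℝ)) := by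
        rw [clm_repr f (fun _ => (m : ℝ) / (2 * n)), Finset.mul_sum]
      rw [hA, hTeq, hfd]
      field_simp
    rw [e1, e2]
    have := hsep d hd
    linarith
  -- the evaluation point
  set p : (Fin n ⊕ Fin n) → ℝ := fun k => if κ k = 0 then 1 else 0 with hp
  have hpk₀ : p k₀ = 1 := by simp [hp, hκk₀]
  have hpelim : Sum.elim (fun i => p (Sum.inl i)) (fun j => p (Sum.inr j)) = p := by
    funext k; cases k <;> rfl
  have hpne : (fun i => p (Sum.inl i)) ≠ 0 ∨ (fun j => p (Sum.inr j)) ≠ 0 := by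
    cases k₀ with
    | inl i =>
      refine Or.inl fun h => ?_
      have h' : p (Sum.inl i) = 0 := congrFun h i
      rw [hpk₀] at h'; exact one_ne_zero h'
    | inr j =>
      refine Or.inr fun h => ?_
      have h' : p (Sum.inr j) = 0 := congrFun h j
      rw [hpk₀] at h'; exact one_ne_zero h'
  have hD := hdet _ _ hpne
  rw [hpelim] at hD
  apply hD
  rw [Matrix.det_apply]
  apply Finset.sum_eq_zero
  intro σ _
  rw [show (∏ i, (Matrix.of fun i j : Fin n =>
        eval p (pderiv (Sum.inl i) (pderiv (Sum.inr j) S))) (σ i) i) = 0 from ?_, smul_zero]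
  by_contra hprod
  have hfac : ∀ i : Fin n, eval p (pderiv (Sum.inl (σ i)) (pderiv (Sum.inr i) S)) ≠ 0 :=
    fun i => Finset.prod_ne_zero_iff.mp hprod i (Finset.mem_univ i)
  have hkineq : ∀ i : Fin n, A < κ (Sum.inl (σ i)) + κ (Sum.inr i) := by
    intro i
    obtain ⟨d', hd', hzero⟩ := eval_ne_zero_exists p _ (hfac i)
    obtain ⟨d₁, hd₁, he₁⟩ := support_pderiv _ _ hd'
    obtain ⟨d, hd, he⟩ := support_pderiv _ _ hd₁
    have hℓd' : ∑ k, κ k * (d' k : ℝ) = 0 := by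
      apply Finset.sum_eq_zero
      intro k _
      by_cases h0 : d' k = 0
      · rw [h0]; simp
      · have hp0 := hzero k h0
        have hκ0 : κ k = 0 := by
          by_contra hne
          exact hp0 (by simp [hp, hne])
        rw [hκ0]; ring
    have hsingle : ∀ (k : Fin n ⊕ Fin n),
        ∑ j, κ j * (((Finsupp.single k 1 : (Fin n ⊕ Fin n) →₀ ℕ)) j : ℝ) = κ k := by
      intro k
      rw [Finset.sum_eq_single k]
      · simp
      · intro j _ hj; simp [Finsupp.single_apply, Ne.symm hj]
      · intro h; exact absurd (Finset.mem_univ k) h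
    have hadd : ∀ (a b : (Fin n ⊕ Fin n) →₀ ℕ), ∑ k, κ k * (((a + b) k : ℕ) : ℝ)
        = ∑ k, κ k * (a k : ℝ) + ∑ k, κ k * (b k : ℝ) := by
      intro a b
      rw [← Finset.sum_add_distrib]
      apply Finset.sum_congr rfl
      intro k _
      simp only [Finsupp.add_apply, Nat.cast_add]
      ring
    have heval : ∑ k, κ k * (d k : ℝ) = κ (Sum.inl (σ i)) + κ (Sum.inr i) := by
      rw [← he, hadd, ← he₁, hadd, hℓd', hsingle, hsingle]
      ring
    rw [← heval]
    exact hkey d hd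
  haveI : Nonempty (Fin n) := ⟨⟨0, hn⟩⟩
  have hsum : ∑ i : Fin n, (κ (Sum.inl (σ i)) + κ (Sum.inr i)) = T := by
    rw [Finset.sum_add_distrib, hT, Fintype.sum_sum_type]
    congr 1
    exact Equiv.sum_comp σ (fun i => κ (Sum.inl i))
  have hlt : (n : ℝ) * A < T := by
    calc (n:ℝ) * A = ∑ _i : Fin n, A := by
          rw [Finset.sum_const, Finset.card_univ, Fintype.card_fin, nsmul_eq_mul]
    _ < ∑ i : Fin n, (κ (Sum.inl (σ i)) + κ (Sum.inr i)) :=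
          Finset.sum_lt_sum_of_nonempty Finset.univ_nonempty (fun i _ => hkineq i)
    _ = T := hsum
  have hTnn : 0 ≤ T := Finset.sum_nonneg fun k _ => hκnn k
  have hnA : (n : ℝ) * A = (m : ℝ) / 2 * T := by
    rw [hA]
    field_simp
  have hm2 : (2:ℝ) ≤ (m:ℝ) := by exact_mod_cast hm
  nlinarith [mul_nonneg (by linarith : (0:ℝ) ≤ (m:ℝ)/2 - 1) hTnn]


/-- `N₀(S)`. -/
noncomputable def newtonRegion {σ : Type*} (S : MvPolynomial σ ℝ) : Set (σ → ℝ) :=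
  convexHull ℝ {p | ∃ d ∈ S.support, ∀ k, (d k : ℝ) ≤ p k}

/-- The Newton distance `δ(S) = inf {δ > 0 : (δ,…,δ) ∈ N₀(S)}`. -/
noncomputable def newtonDistance {σ : Type*} (S : MvPolynomial σ ℝ) : ℝ :=
  sInf {δ : ℝ | 0 < δ ∧ (fun _ => δ) ∈ newtonRegion S}

/-- if `n_X = n_Z = n ≥ 1` and `S` is homogeneous of degree `m`, with no
pure x- or z-terms, and `det S''_{xz}(x,z) ≠ 0` for all `(x,z) ≠ (0,0)`, then
`δ(S) = m/(2n)`. -/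
theorem newtonDistance_of_nondegenerate (n m : ℕ) (hn : 0 < n)
    (S : MvPolynomial (Fin n ⊕ Fin n) ℝ)
    (hS : S.IsHomogeneous m) (hS' : NoPureMonomials S)
    (hdet : ∀ x z : Fin n → ℝ, (x ≠ 0 ∨ z ≠ 0) →
      Matrix.det (Matrix.of fun i j : Fin n =>
        eval (Sum.elim x z) (pderiv (Sum.inl i) (pderiv (Sum.inr j) S))) ≠ 0) :
    newtonDistance S = (m : ℝ) / (2 * n) := by
  classical
  haveI : Nonempty (Fin n) := ⟨⟨0, hn⟩⟩
  -- S is nonzero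
  have hS0 : S ≠ 0 := by
    intro h0
    refine hdet (fun _ => 1) 0 (Or.inl fun h => ?_) ?_
    · have := congrFun h ⟨0, hn⟩; norm_num at this
    · subst h0
      have : (Matrix.of fun i j : Fin n =>
          eval (Sum.elim (fun _ => (1:ℝ)) 0) (pderiv (Sum.inl i) (pderiv (Sum.inr j) (0 : MvPolynomial (Fin n ⊕ Fin n) ℝ)))) = 0 := by
        ext i j; simp
      rw [this, Matrix.det_zero]
  -- m ≥ 2
  obtain ⟨d₀, hd₀⟩ := MvPolynomial.support_nonempty.mpr hS0
  obtain ⟨⟨i0, hi0⟩, ⟨j0, hj0⟩⟩ := hS' d₀ hd₀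
  have hm : 2 ≤ m := by
    have hdeg : ∑ k, (d₀ k : ℝ) = m := sum_coe_eq_deg (hS (mem_support_iff.mp hd₀))
    have hdegn : ∑ k, d₀ k = m := by exact_mod_cast (by push_cast at hdeg ⊢; exact hdeg : ((∑ k, d₀ k : ℕ) : ℝ) = m)
    have h2 : d₀ (Sum.inl i0) + d₀ (Sum.inr j0) ≤ ∑ k, d₀ k :=
      Finset.add_le_sum (fun k _ => Nat.zero_le _) (Finset.mem_univ _) (Finset.mem_univ _) (by simp)
    omega
  have hpos : 0 < (m : ℝ) / (2 * n) := by
    have hm' : (0:ℝ) < m := by exact_mod_cast Nat.lt_of_lt_of_le (by norm_num) hm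
    positivity
  -- membership at the critical value
  have hmem0 : (fun _ => (m : ℝ) / (2 * n)) ∈ newtonRegion S := by
    refine convexHull_mono ?_ (diag_mem_hull n m hn hm S hS hdet)
    rintro q ⟨d, hd, rfl⟩
    exact ⟨d, hd, fun k => le_refl _⟩
  -- lower bound
  have hlb : ∀ δ : ℝ, 0 < δ → (fun _ => δ) ∈ newtonRegion S → (m : ℝ) / (2 * n) ≤ δ := by
    intro δ hδ hmem
    have hsub : newtonRegion S ⊆ {p : (Fin n ⊕ Fin n) → ℝ | (m : ℝ) ≤ ∑ k, p k} := by
      apply convexHull_min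
      · rintro q ⟨d, hd, hle⟩
        have hdeg : ∑ k, (d k : ℝ) = m := sum_coe_eq_deg (hS (mem_support_iff.mp hd))
        calc (m : ℝ) = ∑ k, (d k : ℝ) := hdeg.symm
        _ ≤ ∑ k, q k := Finset.sum_le_sum fun k _ => hle k
      · exact convex_halfSpace_ge
          ⟨fun a b => Finset.sum_add_distrib, fun c x => by simp [Finset.mul_sum, mul_add]⟩ _
    have hmle := hsub hmem
    simp only [Set.mem_setOf_eq, Finset.sum_const, Finset.card_univ, nsmul_eq_mul] at hmle
    have hcard : ((Fintype.card (Fin n ⊕ Fin n)) : ℝ) = 2 * n := by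
      simp [Fintype.card_sum]; ring
    rw [hcard] at hmle
    rw [div_le_iff₀ (by positivity)]
    linarith
  rw [newtonDistance]
  apply le_antisymm
  · exact csInf_le ⟨(m : ℝ) / (2 * n), fun δ hδ => hlb δ hδ.1 hδ.2⟩ ⟨hpos, hmem0⟩
  · exact le_csInf ⟨_, ⟨hpos, hmem0⟩⟩ (fun δ hδ => hlb δ hδ.1 hδ.2)
end

section
/- Suppose S(x,z) = x₁φ₁(z) + x₂φ₂(z) where φ₁, φ₂ are homogeneous polynomials of degree d on ℝ², and s = max over (a,b) ≠ (0,0) of the minimum multiplicity of the linear form az₁ + bz₂ as a factor of φ₁ and of φ₂. If s ≤ d/2, then the modified Newton distance δ_mod(S) equals d/2. -/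
open MvPolynomial

/-- The substitution implementing `(x,z) ↦ (Ax, Bz)` for `2×2` matrices `A`, `B`. -/
noncomputable def linSubst (A B : Matrix (Fin 2) (Fin 2) ℝ) :
    Fin 2 ⊕ Fin 2 → MvPolynomial (Fin 2 ⊕ Fin 2) ℝ :=
  Sum.elim (fun i => ∑ j, C (A i j) * X (Sum.inl j))
    (fun i => ∑ j, C (B i j) * X (Sum.inr j))

/-- The modified Newton distance
`δ_mod(S) = sup { δ(S(Ax,Bz)) : A, B ∈ GL(2,ℝ) }`. -/
noncomputable def modNewtonDistance (S : MvPolynomial (Fin 2 ⊕ Fin 2) ℝ) : ℝ :=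
  sSup {t : ℝ | ∃ A B : Matrix (Fin 2) (Fin 2) ℝ, IsUnit A.det ∧ IsUnit B.det ∧
    t = newtonDistance (aeval (linSubst A B) S)}

/-- The linear form `a z₁ + b z₂` on `ℝ²_z`. -/
noncomputable def linForm (a b : ℝ) : MvPolynomial (Fin 2) ℝ :=
  C a * X 0 + C b * X 1

/-! ### Auxiliary lemmas -/

lemma X_pow_dvd_iff_support {σ R : Type*} [CommRing R] {k : ℕ} {i : σ} {ψ : MvPolynomial σ R} :
    X i ^ k ∣ ψ ↔ ∀ β ∈ ψ.support, k ≤ β i := by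
  rw [X_pow_eq_monomial, monomial_one_dvd_iff_modMonomial_eq_zero]
  constructor
  · intro h β hβ
    by_contra hk
    have hle : ¬ Finsupp.single i k ≤ β := fun hle => hk (Finsupp.single_le_iff.mp hle)
    have := coeff_modMonomial_of_not_le ψ hle
    rw [h, coeff_zero] at this
    exact MvPolynomial.mem_support_iff.mp hβ this.symm
  · intro h
    rw [MvPolynomial.eq_zero_iff]
    intro β
    by_cases hle : Finsupp.single i k ≤ β
    · exact coeff_modMonomial_of_le ψ hle
    · rw [coeff_modMonomial_of_not_le ψ hle]
      by_contra hc
      exact hle (Finsupp.single_le_iff.mpr (h β (MvPolynomial.mem_support_iff.mpr hc)))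

/-- The `z`-substitution by the matrix `B`. -/
noncomputable def fB (B : Matrix (Fin 2) (Fin 2) ℝ) : Fin 2 → MvPolynomial (Fin 2) ℝ :=
  fun i => ∑ j, C (B i j) * X j

lemma aeval_fB_fB (B C : Matrix (Fin 2) (Fin 2) ℝ) (hBC : B * C = 1) (i : Fin 2) :
    aeval (fB C) (fB B i) = X i := by
  simp only [fB, map_sum, map_mul, aeval_C, aeval_X]
  have : ∀ j, (algebraMap ℝ (MvPolynomial (Fin 2) ℝ)) (B i j) * (∑ l, MvPolynomial.C (C j l) * X l)
      = ∑ l, MvPolynomial.C (B i j * C j l) * X l := by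
    intro j
    rw [Finset.mul_sum]
    congr 1; funext l
    rw [← mul_assoc, ← MvPolynomial.algebraMap_eq, ← map_mul]
  simp only [this]
  rw [Finset.sum_comm]
  have : ∀ l, (∑ j, MvPolynomial.C (B i j * C j l) * X l) = MvPolynomial.C ((B * C) i l) * X l := by
    intro l
    rw [Matrix.mul_apply, map_sum, Finset.sum_mul]
  simp only [this, hBC, Matrix.one_apply]
  simp [Finset.sum_ite_eq, apply_ite MvPolynomial.C]

lemma aeval_fB_inv (B : Matrix (Fin 2) (Fin 2) ℝ) (hB : IsUnit B.det)
    (φ : MvPolynomial (Fin 2) ℝ) : aeval (fB B⁻¹) (aeval (fB B) φ) = φ := by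
  have : ((aeval (fB B⁻¹)).comp (aeval (fB B)) : MvPolynomial (Fin 2) ℝ →ₐ[ℝ] _)
      = AlgHom.id ℝ _ := by
    apply MvPolynomial.algHom_ext
    intro i
    simp only [AlgHom.comp_apply, aeval_X, AlgHom.id_apply]
    exact aeval_fB_fB B B⁻¹ (Matrix.mul_nonsing_inv B hB) i
  have := congrArg (fun f => f φ) (congrArg DFunLike.coe this)
  simpa using this

lemma dvd_pullback (B : Matrix (Fin 2) (Fin 2) ℝ) (hB : IsUnit B.det)
    (k : ℕ) (i : Fin 2) (φ : MvPolynomial (Fin 2) ℝ)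
    (h : X i ^ k ∣ aeval (fB B) φ) :
    linForm (B⁻¹ i 0) (B⁻¹ i 1) ^ k ∣ φ := by
  have h2 : (aeval (fB B⁻¹) (X i : MvPolynomial (Fin 2) ℝ)) ^ k
      ∣ aeval (fB B⁻¹) (aeval (fB B) φ) := by
    rw [← map_pow]
    exact map_dvd (aeval (fB B⁻¹)) h
  rw [aeval_fB_inv B hB] at h2
  rw [aeval_X] at h2
  have : fB B⁻¹ i = linForm (B⁻¹ i 0) (B⁻¹ i 1) := by
    simp [fB, linForm, Fin.sum_univ_two]
  rwa [this] at h2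

lemma row_ne_zero (B : Matrix (Fin 2) (Fin 2) ℝ) (hB : IsUnit B.det) (i : Fin 2) :
    (B⁻¹ i 0, B⁻¹ i 1) ≠ (0, 0) := by
  intro h
  have h0 : B⁻¹ i 0 = 0 := congrArg Prod.fst h
  have h1 : B⁻¹ i 1 = 0 := congrArg Prod.snd h
  have hinv : B⁻¹ * B = 1 := Matrix.nonsing_inv_mul B hB
  have : (B⁻¹ * B) i i = 1 := by rw [hinv]; simp [Matrix.one_apply]
  rw [Matrix.mul_apply, Fin.sum_univ_two, h0, h1] at this
  simp at this

lemma aeval_linSubst_rename (A B : Matrix (Fin 2) (Fin 2) ℝ) (φ : MvPolynomial (Fin 2) ℝ) :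
    aeval (linSubst A B) (rename Sum.inr φ) = rename Sum.inr (aeval (fB B) φ) := by
  rw [aeval_rename]
  have hcomp : ((rename (Sum.inr : Fin 2 → Fin 2 ⊕ Fin 2)).comp (aeval (fB B))
      : MvPolynomial (Fin 2) ℝ →ₐ[ℝ] _) = aeval (linSubst A B ∘ Sum.inr) := by
    apply MvPolynomial.algHom_ext
    intro i
    simp [fB, linSubst, aeval_X]
  have := congrArg (fun f => f φ) (congrArg DFunLike.coe hcomp)
  simpa using this.symm

lemma aeval_linSubst_S (A B : Matrix (Fin 2) (Fin 2) ℝ) (φ₁ φ₂ : MvPolynomial (Fin 2) ℝ) :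
    aeval (linSubst A B) (X (Sum.inl 0) * rename Sum.inr φ₁ + X (Sum.inl 1) * rename Sum.inr φ₂)
    = X (Sum.inl 0) * rename Sum.inr (C (A 0 0) * aeval (fB B) φ₁ + C (A 1 0) * aeval (fB B) φ₂)
    + X (Sum.inl 1) * rename Sum.inr (C (A 0 1) * aeval (fB B) φ₁ + C (A 1 1) * aeval (fB B) φ₂) := by
  rw [map_add, map_mul, map_mul, aeval_X, aeval_X, aeval_linSubst_rename, aeval_linSubst_rename]
  simp only [linSubst, Sum.elim_inl, Fin.sum_univ_two]
  simp only [map_add, map_mul, rename_C]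
  ring

lemma inl_not_range_inr (i : Fin 2) :
    (Sum.inl i : Fin 2 ⊕ Fin 2) ∉ Set.range (Sum.inr : Fin 2 → Fin 2 ⊕ Fin 2) := by
  simp

lemma m_apply_inl (i j : Fin 2) (β : Fin 2 →₀ ℕ) :
    ((Finsupp.single (Sum.inl i) 1 + β.mapDomain Sum.inr : (Fin 2 ⊕ Fin 2) →₀ ℕ)) (Sum.inl j)
    = if i = j then 1 else 0 := by
  rw [Finsupp.add_apply, Finsupp.mapDomain_notin_range _ _ (inl_not_range_inr j),
    Finsupp.single_apply, add_zero]
  simp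

lemma m_apply_inr (i j : Fin 2) (β : Fin 2 →₀ ℕ) :
    ((Finsupp.single (Sum.inl i) 1 + β.mapDomain Sum.inr : (Fin 2 ⊕ Fin 2) →₀ ℕ)) (Sum.inr j)
    = β j := by
  rw [Finsupp.add_apply, Finsupp.single_apply,
    Finsupp.mapDomain_apply Sum.inr_injective]
  simp

lemma coeff_T (ψ₁ ψ₂ : MvPolynomial (Fin 2) ℝ) (i : Fin 2) (β : Fin 2 →₀ ℕ) :
    coeff (Finsupp.single (Sum.inl i) 1 + β.mapDomain Sum.inr)
      (X (Sum.inl 0) * rename Sum.inr ψ₁ + X (Sum.inl 1) * rename Sum.inr ψ₂)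
    = coeff β (if i = 0 then ψ₁ else ψ₂) := by
  have key : ∀ (j : Fin 2) (ψ : MvPolynomial (Fin 2) ℝ),
      coeff (Finsupp.single (Sum.inl i) 1 + β.mapDomain Sum.inr) (X (Sum.inl j) * rename Sum.inr ψ)
      = if i = j then coeff β ψ else 0 := by
    intro j ψ
    by_cases hij : i = j
    · subst hij
      rw [coeff_X_mul, coeff_rename_mapDomain _ Sum.inr_injective, if_pos rfl]
    · rw [coeff_X_mul', if_neg, if_neg hij]
      rw [Finsupp.mem_support_iff, m_apply_inl, if_neg hij]
      simp
  rw [coeff_add, key 0 ψ₁, key 1 ψ₂]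
  by_cases h : i = 0
  · subst h; simp
  · have : i = 1 := by omega
    subst this; simp

lemma support_T (ψ₁ ψ₂ : MvPolynomial (Fin 2) ℝ) (m : (Fin 2 ⊕ Fin 2) →₀ ℕ)
    (hm : m ∈ ((X (Sum.inl 0) * rename Sum.inr ψ₁ + X (Sum.inl 1) * rename Sum.inr ψ₂
      : MvPolynomial (Fin 2 ⊕ Fin 2) ℝ)).support) :
    ∃ (i : Fin 2) (β : Fin 2 →₀ ℕ), β ∈ (if i = 0 then ψ₁ else ψ₂).support ∧
      m = Finsupp.single (Sum.inl i) 1 + β.mapDomain Sum.inr := by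
  classical
  rw [MvPolynomial.mem_support_iff, coeff_add] at hm
  have key : ∀ (j : Fin 2) (ψ : MvPolynomial (Fin 2) ℝ),
      coeff m (X (Sum.inl j) * rename Sum.inr ψ) ≠ 0 →
      ∃ β, β ∈ ψ.support ∧ m = Finsupp.single (Sum.inl j) 1 + β.mapDomain Sum.inr := by
    intro j ψ hc
    rw [coeff_X_mul'] at hc
    split_ifs at hc with hmem
    · have hsub : m - Finsupp.single (Sum.inl j) 1
          ∈ (rename (Sum.inr : Fin 2 → Fin 2 ⊕ Fin 2) ψ).support :=
        MvPolynomial.mem_support_iff.mpr hc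
      rw [MvPolynomial.support_rename_of_injective Sum.inr_injective, Finset.mem_image] at hsub
      obtain ⟨β, hβ, hβeq⟩ := hsub
      refine ⟨β, hβ, ?_⟩
      have hle : Finsupp.single (Sum.inl j) 1 ≤ m := by
        rw [Finsupp.single_le_iff]
        rw [Finsupp.mem_support_iff] at hmem
        omega
      rw [hβeq, add_comm, tsub_add_cancel_of_le hle]
    · exact absurd rfl hc
  by_cases h0 : coeff m (X (Sum.inl 0) * rename Sum.inr ψ₁) ≠ 0
  · obtain ⟨β, hβ, heq⟩ := key 0 ψ₁ h0
    exact ⟨0, β, by simpa using hβ, heq⟩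
  · push_neg at h0
    rw [h0, zero_add] at hm
    obtain ⟨β, hβ, heq⟩ := key 1 ψ₂ hm
    exact ⟨1, β, by simpa using hβ, heq⟩

lemma degree_fin2 (β : Fin 2 →₀ ℕ) : β.degree = β 0 + β 1 := by
  rw [Finsupp.degree_apply, Finset.sum_subset (Finset.subset_univ _), Fin.sum_univ_two]
  intro x _ hx
  simpa using Finsupp.notMem_support_iff.mp hx

lemma homog_coords {d : ℕ} {ψ : MvPolynomial (Fin 2) ℝ} (h : ψ.IsHomogeneous d)
    {β : Fin 2 →₀ ℕ} (hβ : β ∈ ψ.support) : β 0 + β 1 = d := by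
  rw [← degree_fin2]
  by_contra hne
  exact MvPolynomial.mem_support_iff.mp hβ (h.coeff_eq_zero hne)

lemma if_homog {d : ℕ} {ψ₁ ψ₂ : MvPolynomial (Fin 2) ℝ} (h₁ : ψ₁.IsHomogeneous d)
    (h₂ : ψ₂.IsHomogeneous d) (i : Fin 2) : (if i = 0 then ψ₁ else ψ₂).IsHomogeneous d := by
  split <;> assumption

lemma mem_newtonRegion_half (d : ℕ) (hd : 2 ≤ d) (ψ₁ ψ₂ : MvPolynomial (Fin 2) ℝ)
    (h₁ : ψ₁.IsHomogeneous d) (h₂ : ψ₂.IsHomogeneous d)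
    (e0 : ∃ (i : Fin 2), ∃ β ∈ (if i = 0 then ψ₁ else ψ₂).support, ((β 0 : ℝ)) ≤ (d:ℝ)/2)
    (e1 : ∃ (i : Fin 2), ∃ β ∈ (if i = 0 then ψ₁ else ψ₂).support, ((β 1 : ℝ)) ≤ (d:ℝ)/2) :
    (fun _ => (d:ℝ)/2) ∈ newtonRegion
      (X (Sum.inl 0) * rename Sum.inr ψ₁ + X (Sum.inl 1) * rename Sum.inr ψ₂
        : MvPolynomial (Fin 2 ⊕ Fin 2) ℝ) := by
  classical
  obtain ⟨i, β, hβ, hu⟩ := e0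
  obtain ⟨j, β', hβ', hv1⟩ := e1
  set T : MvPolynomial (Fin 2 ⊕ Fin 2) ℝ :=
    X (Sum.inl 0) * rename Sum.inr ψ₁ + X (Sum.inl 1) * rename Sum.inr ψ₂ with hT
  set u : ℝ := (β 0 : ℝ) with hudef
  set v : ℝ := (β' 0 : ℝ) with hvdef
  have hsum : (β 0 : ℝ) + (β 1 : ℝ) = d := by
    exact_mod_cast congrArg (Nat.cast : ℕ → ℝ) (homog_coords (if_homog h₁ h₂ i) hβ)
  have hsum' : (β' 0 : ℝ) + (β' 1 : ℝ) = d := by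
    exact_mod_cast congrArg (Nat.cast : ℕ → ℝ) (homog_coords (if_homog h₁ h₂ j) hβ')
  have hv : (d:ℝ)/2 ≤ v := by rw [hvdef]; linarith
  obtain ⟨t, ht0, ht1, hteq⟩ : ∃ t : ℝ, 0 ≤ t ∧ t ≤ 1 ∧ t * u + (1 - t) * v = (d:ℝ)/2 := by
    rcases eq_or_lt_of_le (le_trans hu hv) with heq | hlt
    · exact ⟨1/2, by norm_num, by norm_num, by
        have h1 : u = (d:ℝ)/2 := le_antisymm hu (heq ▸ hv)
        have h2 : v = (d:ℝ)/2 := by rw [← heq, h1]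
        rw [h1, h2]; ring⟩
    · have hvu : v - u ≠ 0 := by linarith
      have h2 : (v - (d:ℝ)/2)/(v - u) * (v - u) = v - (d:ℝ)/2 := div_mul_cancel₀ _ hvu
      refine ⟨(v - (d:ℝ)/2)/(v - u), div_nonneg (by linarith) (by linarith), ?_, ?_⟩
      · rw [div_le_one (by linarith)]; linarith
      · linear_combination (-1 : ℝ) * h2
  set m₁ : (Fin 2 ⊕ Fin 2) →₀ ℕ := Finsupp.single (Sum.inl i) 1 + β.mapDomain Sum.inr with hm₁def
  set m₂ : (Fin 2 ⊕ Fin 2) →₀ ℕ := Finsupp.single (Sum.inl j) 1 + β'.mapDomain Sum.inr with hm₂def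
  have hm₁ : m₁ ∈ T.support := by
    rw [MvPolynomial.mem_support_iff, hm₁def, coeff_T]
    exact MvPolynomial.mem_support_iff.mp hβ
  have hm₂ : m₂ ∈ T.support := by
    rw [MvPolynomial.mem_support_iff, hm₂def, coeff_T]
    exact MvPolynomial.mem_support_iff.mp hβ'
  set G : Set ((Fin 2 ⊕ Fin 2) → ℝ) := {p | ∃ m ∈ T.support, ∀ k, (m k : ℝ) ≤ p k} with hG
  set r : (Fin 2 ⊕ Fin 2) → ℝ :=
    fun c => (d:ℝ)/2 - (t * (m₁ c : ℝ) + (1 - t) * (m₂ c : ℝ)) with hr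
  have hbound : ∀ c, t * (m₁ c : ℝ) + (1 - t) * (m₂ c : ℝ) ≤ (d:ℝ)/2 := by
    intro c
    cases c with
    | inl l =>
      have e1 : (m₁ (Sum.inl l) : ℝ) ≤ 1 := by
        rw [hm₁def, m_apply_inl]; split <;> norm_num
      have e2 : (m₂ (Sum.inl l) : ℝ) ≤ 1 := by
        rw [hm₂def, m_apply_inl]; split <;> norm_num
      have e3 : (0:ℝ) ≤ (m₁ (Sum.inl l) : ℝ) := by positivity
      have e4 : (0:ℝ) ≤ (m₂ (Sum.inl l) : ℝ) := by positivity
      have hd2 : (1:ℝ) ≤ (d:ℝ)/2 := by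
        have : (2:ℝ) ≤ (d:ℝ) := by exact_mod_cast hd
        linarith
      nlinarith
    | inr l =>
      have hb1 : (m₁ (Sum.inr l) : ℝ) = (β l : ℝ) := by rw [hm₁def, m_apply_inr]
      have hb2 : (m₂ (Sum.inr l) : ℝ) = (β' l : ℝ) := by rw [hm₂def, m_apply_inr]
      rw [hb1, hb2]
      have hl : l = 0 ∨ l = 1 := by omega
      rcases hl with rfl | rfl
      · rw [hudef, hvdef] at hteq; linarith
      · have hβ1 : (β 1 : ℝ) = (d:ℝ) - u := by rw [hudef]; linarith
        have hβ'1 : (β' 1 : ℝ) = (d:ℝ) - v := by rw [hvdef]; linarith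
        rw [hβ1, hβ'1]; linarith
  have hr0 : ∀ c, 0 ≤ r c := by
    intro c
    rw [hr]
    have := hbound c
    linarith
  set q₁ : (Fin 2 ⊕ Fin 2) → ℝ := fun c => (m₁ c : ℝ) + r c with hq₁
  set q₂ : (Fin 2 ⊕ Fin 2) → ℝ := fun c => (m₂ c : ℝ) + r c with hq₂
  have hq₁G : q₁ ∈ G := ⟨m₁, hm₁, fun k => by
    show (m₁ k : ℝ) ≤ (m₁ k : ℝ) + r k
    have := hr0 k; linarith⟩
  have hq₂G : q₂ ∈ G := ⟨m₂, hm₂, fun k => by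
    show (m₂ k : ℝ) ≤ (m₂ k : ℝ) + r k
    have := hr0 k; linarith⟩
  have hcombo : (fun _ => (d:ℝ)/2) = t • q₁ + (1 - t) • q₂ := by
    funext c
    simp only [Pi.add_apply, Pi.smul_apply, smul_eq_mul, hq₁, hq₂, hr]
    ring
  rw [hcombo]
  show t • q₁ + (1 - t) • q₂ ∈ convexHull ℝ G
  exact (convex_convexHull ℝ G) (subset_convexHull ℝ G hq₁G) (subset_convexHull ℝ G hq₂G)
    ht0 (by linarith) (by ring)

lemma newtonRegion_lower (d : ℕ) (ψ₁ ψ₂ : MvPolynomial (Fin 2) ℝ)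
    (h₁ : ψ₁.IsHomogeneous d) (h₂ : ψ₂.IsHomogeneous d) (p : (Fin 2 ⊕ Fin 2) → ℝ)
    (hp : p ∈ newtonRegion
      (X (Sum.inl 0) * rename Sum.inr ψ₁ + X (Sum.inl 1) * rename Sum.inr ψ₂
        : MvPolynomial (Fin 2 ⊕ Fin 2) ℝ)) :
    (d:ℝ) ≤ p (Sum.inr 0) + p (Sum.inr 1) := by
  classical
  set H : Set ((Fin 2 ⊕ Fin 2) → ℝ) := {p | (d:ℝ) ≤ p (Sum.inr 0) + p (Sum.inr 1)} with hH
  have hHconv : Convex ℝ H := by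
    intro x hx y hy a b ha hb hab
    simp only [hH, Set.mem_setOf_eq, Pi.add_apply, Pi.smul_apply, smul_eq_mul] at *
    nlinarith
  have hsub : {p : (Fin 2 ⊕ Fin 2) → ℝ | ∃ m ∈ (X (Sum.inl 0) * rename Sum.inr ψ₁ +
      X (Sum.inl 1) * rename Sum.inr ψ₂ : MvPolynomial (Fin 2 ⊕ Fin 2) ℝ).support,
      ∀ k, (m k : ℝ) ≤ p k} ⊆ H := by
    rintro p ⟨m, hm, hle⟩
    obtain ⟨i, β, hβ, rfl⟩ := support_T ψ₁ ψ₂ m hm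
    have hd : β 0 + β 1 = d := homog_coords (if_homog h₁ h₂ i) hβ
    have l0 := hle (Sum.inr 0)
    have l1 := hle (Sum.inr 1)
    rw [m_apply_inr] at l0 l1
    simp only [hH, Set.mem_setOf_eq]
    have : ((β 0 : ℕ) : ℝ) + ((β 1 : ℕ) : ℝ) = (d : ℝ) := by exact_mod_cast congrArg Nat.cast hd
    linarith
  exact convexHull_min hsub hHconv hp

lemma dvd_unmix (a b c e : ℝ) (hdet : a * e - b * c ≠ 0)
    (p q φ₁' φ₂' g : MvPolynomial (Fin 2) ℝ)
    (hp : p = C a * φ₁' + C c * φ₂') (hq : q = C b * φ₁' + C e * φ₂')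
    (h1 : g ∣ p) (h2 : g ∣ q) : g ∣ φ₁' ∧ g ∣ φ₂' := by
  have key1 : C (a * e - b * c) * φ₁' = C e * p - C c * q := by
    rw [hp, hq, map_sub, map_mul, map_mul]
    ring
  have key2 : C (a * e - b * c) * φ₂' = C a * q - C b * p := by
    rw [hp, hq, map_sub, map_mul, map_mul]
    ring
  constructor
  · have hdvd : g ∣ C (a * e - b * c) * φ₁' := by
      rw [key1]
      exact dvd_sub (h1.mul_left _) (h2.mul_left _)
    have : φ₁' = C (a * e - b * c)⁻¹ * (C (a * e - b * c) * φ₁') := by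
      rw [← mul_assoc, ← map_mul, inv_mul_cancel₀ hdet, map_one, one_mul]
    rw [this]
    exact hdvd.mul_left _
  · have hdvd : g ∣ C (a * e - b * c) * φ₂' := by
      rw [key2]
      exact dvd_sub (h2.mul_left _) (h1.mul_left _)
    have : φ₂' = C (a * e - b * c)⁻¹ * (C (a * e - b * c) * φ₂') := by
      rw [← mul_assoc, ← map_mul, inv_mul_cancel₀ hdet, map_one, one_mul]
    rw [this]
    exact hdvd.mul_left _

lemma fB_homog (B : Matrix (Fin 2) (Fin 2) ℝ) (i : Fin 2) : (fB B i).IsHomogeneous 1 := by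
  exact MvPolynomial.IsHomogeneous.sum _ _ _ (fun j _ => isHomogeneous_C_mul_X (B i j) j)

lemma aeval_fB_homog {d : ℕ} (B : Matrix (Fin 2) (Fin 2) ℝ) {φ : MvPolynomial (Fin 2) ℝ}
    (h : φ.IsHomogeneous d) : (aeval (fB B) φ).IsHomogeneous d := by
  simpa using h.aeval (fB B) (fB_homog B)

/-- for `S(x,z) = x₁φ₁(z) + x₂φ₂(z)` with `φ₁, φ₂` homogeneous of degree
`d`, and `s` the maximal common multiplicity of a linear factor of `φ₁` and `φ₂`, if
`s ≤ d/2` then `δ_mod(S) = d/2`. -/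
theorem modNewtonDistance_eq_half_d (d s : ℕ) (hd : 2 ≤ d)
    (φ₁ φ₂ : MvPolynomial (Fin 2) ℝ)
    (h₁ : φ₁.IsHomogeneous d) (h₂ : φ₂.IsHomogeneous d)
    (hs₁ : ∃ a b : ℝ, (a, b) ≠ (0, 0) ∧ linForm a b ^ s ∣ φ₁ ∧ linForm a b ^ s ∣ φ₂)
    (hs₂ : ∀ a b : ℝ, (a, b) ≠ (0, 0) →
      ¬(linForm a b ^ (s + 1) ∣ φ₁ ∧ linForm a b ^ (s + 1) ∣ φ₂))
    (hs : (s : ℝ) ≤ (d : ℝ) / 2)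
    (S : MvPolynomial (Fin 2 ⊕ Fin 2) ℝ)
    (hS : S = X (Sum.inl 0) * rename Sum.inr φ₁ + X (Sum.inl 1) * rename Sum.inr φ₂) :
    modNewtonDistance S = (d : ℝ) / 2 := by
  classical
  set k : ℕ := d / 2 + 1 with hk
  have hsk : s + 1 ≤ k := by
    have h2s : 2 * s ≤ d := by
      have : (2 : ℝ) * s ≤ d := by linarith
      exact_mod_cast this
    have : s ≤ d / 2 := Nat.le_div_iff_mul_le (by norm_num) |>.mpr (by omega)
    omega
  have hkd : (d : ℝ) / 2 < (k : ℝ) := by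
    have : d < 2 * k := by omega
    have : (d : ℝ) < 2 * k := by exact_mod_cast this
    linarith
  have hd2pos : (0:ℝ) < (d:ℝ)/2 := by
    have : (2:ℝ) ≤ (d:ℝ) := by exact_mod_cast hd
    linarith
  -- The key claim: for every invertible A, B, the Newton distance of the transformed
  -- polynomial is exactly d/2.
  have key : ∀ A B : Matrix (Fin 2) (Fin 2) ℝ, IsUnit A.det → IsUnit B.det →
      newtonDistance (aeval (linSubst A B) S) = (d:ℝ)/2 := by
    intro A B hA hB
    rw [hS, aeval_linSubst_S]
    set φ₁' : MvPolynomial (Fin 2) ℝ := aeval (fB B) φ₁ with hφ₁'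
    set φ₂' : MvPolynomial (Fin 2) ℝ := aeval (fB B) φ₂ with hφ₂'
    set ψ₁ : MvPolynomial (Fin 2) ℝ := C (A 0 0) * φ₁' + C (A 1 0) * φ₂' with hψ₁
    set ψ₂ : MvPolynomial (Fin 2) ℝ := C (A 0 1) * φ₁' + C (A 1 1) * φ₂' with hψ₂
    have hψ₁h : ψ₁.IsHomogeneous d :=
      ((aeval_fB_homog B h₁).C_mul _).add ((aeval_fB_homog B h₂).C_mul _)
    have hψ₂h : ψ₂.IsHomogeneous d :=
      ((aeval_fB_homog B h₁).C_mul _).add ((aeval_fB_homog B h₂).C_mul _)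
    have hdetA : A 0 0 * A 1 1 - A 0 1 * A 1 0 ≠ 0 := by
      have := hA.ne_zero
      rw [Matrix.det_fin_two] at this
      intro h; apply this; linarith
    -- straddle: in each coordinate l there is a support exponent that is ≤ d/2
    have straddle : ∀ l : Fin 2,
        ∃ (i : Fin 2), ∃ β ∈ (if i = 0 then ψ₁ else ψ₂).support, ((β l : ℝ)) ≤ (d:ℝ)/2 := by
      intro l
      by_contra hcon
      push_neg at hcon
      have hdvd : ∀ ψ : MvPolynomial (Fin 2) ℝ, (∀ β ∈ ψ.support, (d:ℝ)/2 < (β l : ℝ)) →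
          X l ^ k ∣ ψ := by
        intro ψ hψ
        rw [X_pow_dvd_iff_support]
        intro β hβ
        have := hψ β hβ
        have : (d:ℝ) < 2 * (β l : ℝ) := by linarith
        have hn : d < 2 * β l := by exact_mod_cast this
        omega
      have hdψ₁ : X l ^ k ∣ ψ₁ := hdvd ψ₁ (by
        intro β hβ; have := hcon 0 β (by simpa using hβ); exact this)
      have hdψ₂ : X l ^ k ∣ ψ₂ := hdvd ψ₂ (by
        intro β hβ; have := hcon 1 β (by simpa using hβ); exact this)
      obtain ⟨hdφ₁', hdφ₂'⟩ := dvd_unmix (A 0 0) (A 0 1) (A 1 0) (A 1 1) hdetA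
        ψ₁ ψ₂ φ₁' φ₂' (X l ^ k) hψ₁ hψ₂ hdψ₁ hdψ₂
      have hL₁ : linForm (B⁻¹ l 0) (B⁻¹ l 1) ^ k ∣ φ₁ := dvd_pullback B hB k l φ₁ hdφ₁'
      have hL₂ : linForm (B⁻¹ l 0) (B⁻¹ l 1) ^ k ∣ φ₂ := dvd_pullback B hB k l φ₂ hdφ₂'
      exact hs₂ (B⁻¹ l 0) (B⁻¹ l 1) (row_ne_zero B hB l)
        ⟨(pow_dvd_pow _ hsk).trans hL₁, (pow_dvd_pow _ hsk).trans hL₂⟩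
    have hmem : ((d:ℝ)/2) ∈ {δ : ℝ | 0 < δ ∧ (fun _ => δ) ∈ newtonRegion
        (X (Sum.inl 0) * rename Sum.inr ψ₁ + X (Sum.inl 1) * rename Sum.inr ψ₂
          : MvPolynomial (Fin 2 ⊕ Fin 2) ℝ)} :=
      ⟨hd2pos, mem_newtonRegion_half d hd ψ₁ ψ₂ hψ₁h hψ₂h (straddle 0) (straddle 1)⟩
    have hlb : ∀ δ ∈ {δ : ℝ | 0 < δ ∧ (fun _ => δ) ∈ newtonRegion
        (X (Sum.inl 0) * rename Sum.inr ψ₁ + X (Sum.inl 1) * rename Sum.inr ψ₂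
          : MvPolynomial (Fin 2 ⊕ Fin 2) ℝ)}, (d:ℝ)/2 ≤ δ := by
      rintro δ ⟨hδpos, hδmem⟩
      have := newtonRegion_lower d ψ₁ ψ₂ hψ₁h hψ₂h _ hδmem
      linarith
    rw [newtonDistance]
    exact le_antisymm (csInf_le ⟨(d:ℝ)/2, hlb⟩ hmem) (le_csInf ⟨_, hmem⟩ hlb)
  -- now compute the sup
  have hone : IsUnit (1 : Matrix (Fin 2) (Fin 2) ℝ).det := by
    rw [Matrix.det_one]; exact isUnit_one
  have hmemT : ((d:ℝ)/2) ∈ {t : ℝ | ∃ A B : Matrix (Fin 2) (Fin 2) ℝ,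
      IsUnit A.det ∧ IsUnit B.det ∧ t = newtonDistance (aeval (linSubst A B) S)} :=
    ⟨1, 1, hone, hone, (key 1 1 hone hone).symm⟩
  have hub : ∀ t ∈ {t : ℝ | ∃ A B : Matrix (Fin 2) (Fin 2) ℝ,
      IsUnit A.det ∧ IsUnit B.det ∧ t = newtonDistance (aeval (linSubst A B) S)},
      t ≤ (d:ℝ)/2 := by
    rintro t ⟨A, B, hA, hB, rfl⟩
    rw [key A B hA hB]
  rw [modNewtonDistance]
  exact le_antisymm (csSup_le ⟨_, hmemT⟩ hub) (le_csSup ⟨(d:ℝ)/2, hub⟩ hmemT)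
end
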